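/- arXiv:1110.0903 — 4 statements merged into one kernel-verified Lean document; each statement's English description precedes it below -/
import Mathlib

section
/- Let X and Y be finite-dimensional real Banach spaces and let f : X → Y be an ε-isometry for some ε > 0. Then there exist a finite-dimensional real Banach space Z and linear isometries i : X → Z and j : Y → Z such that ‖j ∘ f − i‖ ≤ ε (i.e., ‖j(f x) − i x‖ ≤ ε · ‖x‖ for all x ∈ X). -/
/-!
Glue `X` and `Y` along `f`: let `Z` be the quotient of the `ℓ¹`-sum `X ⊕₁ Y ⊕₁ X` by the image of
`u ↦ (u, -f u, ε • u)`. Modulo this relation `(-x, f x, 0)` equals `(0, 0, ε • x)`, which gives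
`‖j (f x) - i x‖ ≤ ε ‖x‖`. The embeddings stay isometric: another representative
`(x + u, -f u, ε • u)` of `i x` has norm at least `‖x + u‖ + ‖u‖ ≥ ‖x‖`, because
`(1 + ε)⁻¹ ‖u‖ ≤ ‖f u‖` and `(1 + ε)⁻¹ + ε ≥ 1`; symmetrically for `j`, using
`‖f u‖ ≤ (1 + ε) ‖u‖`.
-/

/-- A linear operator `f : X → Y` between real normed spaces is an `ε`-isometry if
`(1+ε)⁻¹ < ‖f x‖ < 1+ε` for every `x` with `‖x‖ = 1`. -/
def IsEpsIsometry (ε : ℝ) {X Y : Type*} [NormedAddCommGroup X] [NormedSpace ℝ X]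
    [NormedAddCommGroup Y] [NormedSpace ℝ Y] (f : X →ₗ[ℝ] Y) : Prop :=
  ∀ x : X, ‖x‖ = 1 → (1 + ε)⁻¹ < ‖f x‖ ∧ ‖f x‖ < 1 + ε

section QuotientNorm

variable {R V M : Type*} [Ring R] [AddCommGroup V] [Module R V] [SeminormedAddCommGroup M]
  [Module R M] (g : V →ₗ[R] M)

theorem Submodule.Quotient.norm_mk_range_le (m : M) (u : V) :
    ‖(Submodule.Quotient.mk m : M ⧸ LinearMap.range g)‖ ≤ ‖m + g u‖ := by
  rw [(Submodule.Quotient.eq' _).mpr (by simp : -m + (m + g u) ∈ LinearMap.range g)]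
  exact Submodule.Quotient.norm_mk_le _ _

theorem Submodule.Quotient.le_norm_mk_range {m : M} {r : ℝ} (h : ∀ u, r ≤ ‖m + g u‖) :
    r ≤ ‖(Submodule.Quotient.mk m : M ⧸ LinearMap.range g)‖ := by
  refine QuotientAddGroup.le_norm_iff.mpr fun m' hm' => ?_
  obtain ⟨u, hu⟩ := (Submodule.Quotient.eq _).mp hm'
  rw [eq_add_of_sub_eq' hu.symm]
  exact h u

end QuotientNorm

theorem LinearMap.norm_map_eq_norm_mul_norm_map_smul_inv_norm {X Y : Type*}
    [NormedAddCommGroup X] [NormedSpace ℝ X] [NormedAddCommGroup Y] [NormedSpace ℝ Y]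
    (f : X →ₗ[ℝ] Y) (u : X) : ‖f u‖ = ‖u‖ * ‖f (‖u‖⁻¹ • u)‖ := by
  rcases eq_or_ne u 0 with rfl | hu
  · simp
  · rw [map_smul, norm_smul, norm_inv, norm_norm, mul_inv_cancel_left₀ (norm_ne_zero_iff.mpr hu)]

namespace IsEpsIsometry

variable {X Y : Type*} [NormedAddCommGroup X] [NormedSpace ℝ X]
  [NormedAddCommGroup Y] [NormedSpace ℝ Y] {ε : ℝ} {f : X →ₗ[ℝ] Y}

theorem inv_one_add_mul_norm_le (hf : IsEpsIsometry ε f) (u : X) :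
    (1 + ε)⁻¹ * ‖u‖ ≤ ‖f u‖ := by
  rcases eq_or_ne u 0 with rfl | hu
  · simp
  · rw [f.norm_map_eq_norm_mul_norm_map_smul_inv_norm, mul_comm]
    exact mul_le_mul_of_nonneg_left (hf _ (norm_smul_inv_norm hu)).1.le (norm_nonneg u)

theorem norm_map_le (hf : IsEpsIsometry ε f) (u : X) : ‖f u‖ ≤ (1 + ε) * ‖u‖ := by
  rcases eq_or_ne u 0 with rfl | hu
  · simp
  · rw [f.norm_map_eq_norm_mul_norm_map_smul_inv_norm, mul_comm _ ‖u‖]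
    exact mul_le_mul_of_nonneg_left (hf _ (norm_smul_inv_norm hu)).2.le (norm_nonneg u)

theorem norm_le_norm_map_add_mul_norm (hε : 0 ≤ ε) (hf : IsEpsIsometry ε f) (u : X) :
    ‖u‖ ≤ ‖f u‖ + ε * ‖u‖ :=
  calc ‖u‖ = (1 + ε)⁻¹ * ‖u‖ + ε * ((1 + ε)⁻¹ * ‖u‖) := by field_simp
    _ ≤ ‖f u‖ + ε * ‖u‖ := by
      gcongr
      · exact hf.inv_one_add_mul_norm_le u
      · exact mul_le_of_le_one_left (norm_nonneg u) (inv_le_one_of_one_le₀ (by linarith))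

end IsEpsIsometry

section Amalgam

variable {X Y : Type*} [NormedAddCommGroup X] [NormedSpace ℝ X]
  [NormedAddCommGroup Y] [NormedSpace ℝ Y] (ε : ℝ) (f : X →ₗ[ℝ] Y)

variable (X Y) in
def Amalgam.l1TripleEquiv : (X × Y × X) ≃ₗ[ℝ] WithLp 1 (X × WithLp 1 (Y × X)) :=
  ((LinearEquiv.refl ℝ X).prodCongr (WithLp.linearEquiv 1 ℝ (Y × X)).symm).trans
    (WithLp.linearEquiv 1 ℝ _).symm

theorem Amalgam.norm_l1TripleEquiv (p : X × Y × X) :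
    ‖l1TripleEquiv X Y p‖ = ‖p.1‖ + ‖p.2.1‖ + ‖p.2.2‖ := by
  simp [l1TripleEquiv, WithLp.prod_norm_eq_of_L1, add_assoc]

def Amalgam.relation : X →ₗ[ℝ] WithLp 1 (X × WithLp 1 (Y × X)) :=
  (l1TripleEquiv X Y).toLinearMap ∘ₗ LinearMap.id.prod ((-f).prod (ε • LinearMap.id))

theorem Amalgam.relation_apply (u : X) :
    relation ε f u = l1TripleEquiv X Y (u, -f u, ε • u) :=
  rfl

abbrev Amalgam : Type _ :=
  WithLp 1 (X × WithLp 1 (Y × X)) ⧸ LinearMap.range (Amalgam.relation ε f)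

def Amalgam.inl : X →ₗ[ℝ] Amalgam ε f :=
  (LinearMap.range (relation ε f)).mkQ ∘ₗ (l1TripleEquiv X Y).toLinearMap ∘ₗ
    LinearMap.inl ℝ _ _

def Amalgam.inr : Y →ₗ[ℝ] Amalgam ε f :=
  (LinearMap.range (relation ε f)).mkQ ∘ₗ (l1TripleEquiv X Y).toLinearMap ∘ₗ
    LinearMap.inr ℝ _ _ ∘ₗ LinearMap.inl ℝ _ _

theorem Amalgam.inl_apply (x : X) :
    inl ε f x = Submodule.Quotient.mk (l1TripleEquiv X Y (x, 0, 0)) :=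
  rfl

theorem Amalgam.inr_apply (y : Y) :
    inr ε f y = Submodule.Quotient.mk (l1TripleEquiv X Y (0, y, 0)) :=
  rfl

variable {ε f}

theorem Amalgam.norm_inl (hε : 0 ≤ ε) (hf : IsEpsIsometry ε f) (x : X) :
    ‖inl ε f x‖ = ‖x‖ := by
  refine le_antisymm ((Submodule.Quotient.norm_mk_le _ _).trans (by simp [norm_l1TripleEquiv]))
    (Submodule.Quotient.le_norm_mk_range _ fun u => ?_)
  simp [relation_apply, ← map_add, norm_l1TripleEquiv, norm_smul, abs_of_nonneg hε]
  linarith [norm_le_add_norm_add x u, hf.norm_le_norm_map_add_mul_norm hε u]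

theorem Amalgam.norm_inr (hε : 0 ≤ ε) (hf : IsEpsIsometry ε f) (y : Y) :
    ‖inr ε f y‖ = ‖y‖ := by
  refine le_antisymm ((Submodule.Quotient.norm_mk_le _ _).trans (by simp [norm_l1TripleEquiv]))
    (Submodule.Quotient.le_norm_mk_range _ fun u => ?_)
  simp [relation_apply, ← map_add, norm_l1TripleEquiv, norm_smul, abs_of_nonneg hε,
    ← sub_eq_add_neg]
  linarith [norm_le_norm_sub_add y (f u), hf.norm_map_le u]

theorem Amalgam.norm_inr_map_sub_inl_le (hε : 0 ≤ ε) (x : X) :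
    ‖inr ε f (f x) - inl ε f x‖ ≤ ε * ‖x‖ := by
  have hrep : inr ε f (f x) - inl ε f x =
      Submodule.Quotient.mk (l1TripleEquiv X Y (-x, f x, 0)) := by
    rw [inl_apply, inr_apply, ← Submodule.Quotient.mk_sub, ← map_sub]
    simp
  rw [hrep]
  refine (Submodule.Quotient.norm_mk_range_le (relation ε f) _ x).trans_eq ?_
  simp [relation_apply, ← map_add, norm_l1TripleEquiv, norm_smul, abs_of_nonneg hε]

end Amalgam

/-- If `X`, `Y` are finite-dimensional real Banach spaces and `f : X → Y` is an
`ε`-isometry, then there are a finite-dimensional real Banach space `Z` and linear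
isometries `i : X → Z`, `j : Y → Z` with `‖j ∘ f - i‖ ≤ ε`. -/
theorem exists_common_superspace_of_epsIsometry
    {X Y : Type} [NormedAddCommGroup X] [NormedSpace ℝ X] [FiniteDimensional ℝ X]
    [NormedAddCommGroup Y] [NormedSpace ℝ Y] [FiniteDimensional ℝ Y]
    (ε : ℝ) (hε : 0 < ε) (f : X →ₗ[ℝ] Y) (hf : IsEpsIsometry ε f) :
    ∃ (Z : Type) (_ : NormedAddCommGroup Z) (_ : NormedSpace ℝ Z),
      FiniteDimensional ℝ Z ∧
      ∃ (i : X →ₗ[ℝ] Z) (j : Y →ₗ[ℝ] Z),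
        (∀ x : X, ‖i x‖ = ‖x‖) ∧ (∀ y : Y, ‖j y‖ = ‖y‖) ∧
        ∀ x : X, ‖j (f x) - i x‖ ≤ ε * ‖x‖ := by
  have : IsClosed
      (LinearMap.range (Amalgam.relation ε f) : Set (WithLp 1 (X × WithLp 1 (Y × X)))) :=
    Submodule.closed_of_finiteDimensional _
  exact ⟨Amalgam ε f, inferInstance, inferInstance, inferInstance, Amalgam.inl ε f,
    Amalgam.inr ε f, Amalgam.norm_inl hε.le hf, Amalgam.norm_inr hε.le hf,
    Amalgam.norm_inr_map_sub_inl_le hε.le⟩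
end

section
/- Let X and Y be finite-dimensional real Banach spaces and let f : X → Y be a bijective ε-isometry for some ε > 0. Then there exists a norm ‖·‖' on the direct sum X ⊕ Y such that ‖(x, 0)‖' = ‖x‖_X for all x ∈ X, ‖(0, y)‖' = ‖y‖_Y for all y ∈ Y, and ‖(−x, f x)‖' ≤ ε for every x ∈ X with ‖x‖_X = 1. -/
open NNReal

namespace Seminorm

variable {𝕜 E F : Type*} [NormedField 𝕜] [AddCommGroup E] [Module 𝕜 E] [AddCommGroup F]
  [Module 𝕜 F]

/-- The pushforward of `(a, z) ↦ p a + q z` along `(a, z) ↦ a + L z`; for `L = LinearMap.id` it is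
`p ⊓ q`. -/
noncomputable def infConvAlong (p : Seminorm 𝕜 E) (q : Seminorm 𝕜 F) (L : F →ₗ[𝕜] E) :
    Seminorm 𝕜 E :=
  have bdd : ∀ x, BddBelow (Set.range fun z => p (x - L z) + q z) := fun x =>
    ⟨0, by rintro _ ⟨z, rfl⟩; positivity⟩
  Seminorm.ofSMulLE (fun x => ⨅ z, p (x - L z) + q z)
    (le_antisymm (ciInf_le_of_le (bdd 0) 0 (by simp)) (Real.iInf_nonneg fun _ => by positivity))
    (fun x y => le_ciInf_add_ciInf fun z w => ciInf_le_of_le (bdd _) (z + w) <|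
      calc p (x + y - L (z + w)) + q (z + w)
          ≤ (p (x - L z) + p (y - L w)) + (q z + q w) := by
            rw [map_add, add_sub_add_comm]
            exact add_le_add (map_add_le_add p _ _) (map_add_le_add q _ _)
        _ = p (x - L z) + q z + (p (y - L w) + q w) := by ring)
    (fun r x => by
      rw [Real.mul_iInf_of_nonneg (norm_nonneg r)]
      exact le_ciInf fun z => ciInf_le_of_le (bdd _) (r • z) <| by
        rw [map_smul, ← smul_sub, map_smul_eq_mul, map_smul_eq_mul, mul_add])

variable {p : Seminorm 𝕜 E} {q : Seminorm 𝕜 F} {L : F →ₗ[𝕜] E}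

theorem infConvAlong_le (x : E) (z : F) : p.infConvAlong q L x ≤ p (x - L z) + q z :=
  ciInf_le ⟨0, by rintro _ ⟨z, rfl⟩; positivity⟩ z

theorem le_infConvAlong {x : E} {c : ℝ} (h : ∀ z, c ≤ p (x - L z) + q z) :
    c ≤ p.infConvAlong q L x :=
  le_ciInf h

end Seminorm

section Sphere

variable {𝕜 E F : Type*} [RCLike 𝕜] [NormedAddCommGroup E] [NormedSpace 𝕜 E]
  [SeminormedAddCommGroup F] [NormedSpace 𝕜 F] (f : E →ₗ[𝕜] F)

theorem LinearMap.norm_apply_eq_norm_mul_norm_apply_smul_inv_norm (z : E) :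
    ‖f z‖ = ‖z‖ * ‖f ((‖z‖⁻¹ : 𝕜) • z)‖ := by
  rcases eq_or_ne z 0 with rfl | hz
  · simp
  · rw [map_smul, norm_smul, norm_inv, RCLike.norm_ofReal, abs_norm,
      mul_inv_cancel_left₀ (norm_ne_zero_iff.mpr hz)]

theorem LinearMap.norm_apply_le_of_sphere {C : ℝ} (h : ∀ x, ‖x‖ = 1 → ‖f x‖ ≤ C) (z : E) :
    ‖f z‖ ≤ C * ‖z‖ := by
  rcases eq_or_ne z 0 with rfl | hz
  · simp
  · rw [f.norm_apply_eq_norm_mul_norm_apply_smul_inv_norm, mul_comm C]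
    exact mul_le_mul_of_nonneg_left (h _ (norm_smul_inv_norm hz)) (norm_nonneg z)

theorem LinearMap.le_norm_apply_of_sphere {c : ℝ} (h : ∀ x, ‖x‖ = 1 → c ≤ ‖f x‖) (z : E) :
    c * ‖z‖ ≤ ‖f z‖ := by
  rcases eq_or_ne z 0 with rfl | hz
  · simp
  · rw [f.norm_apply_eq_norm_mul_norm_apply_smul_inv_norm, mul_comm c]
    exact mul_le_mul_of_nonneg_left (h _ (norm_smul_inv_norm hz)) (norm_nonneg z)

end Sphere

namespace IsEpsIsometry

variable {X Y : Type*} [NormedAddCommGroup X] [NormedSpace ℝ X] [NormedAddCommGroup Y]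
  [NormedSpace ℝ Y] {f : X →ₗ[ℝ] Y} {ε : ℝ}

theorem norm_apply_le (hf : IsEpsIsometry ε f) (z : X) : ‖f z‖ ≤ ‖z‖ + ε * ‖z‖ := by
  have := f.norm_apply_le_of_sphere (fun x hx => (hf x hx).2.le) z
  linarith

theorem norm_le_norm_apply (hε : 0 ≤ ε) (hf : IsEpsIsometry ε f) (z : X) :
    ‖z‖ ≤ ‖f z‖ + ε * ‖z‖ := by
  have hlower := f.le_norm_apply_of_sphere (fun x hx => (hf x hx).1.le) z
  have hinv : 1 - ε ≤ (1 + ε)⁻¹ := by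
    rw [inv_eq_one_div, le_div_iff₀ (by linarith)]
    nlinarith
  nlinarith [norm_nonneg z]

end IsEpsIsometry

section Gluing

variable {X Y : Type*} [SeminormedAddCommGroup X] [NormedSpace ℝ X] [SeminormedAddCommGroup Y]
  [NormedSpace ℝ Y]

noncomputable def gluingSeminorm (f : X →ₗ[ℝ] Y) (ε : ℝ≥0) : Seminorm ℝ (X × Y) :=
  ((normSeminorm ℝ X).comp (LinearMap.fst ℝ X Y) + (normSeminorm ℝ Y).comp (LinearMap.snd ℝ X Y))
    |>.infConvAlong (ε • normSeminorm ℝ X) ((-LinearMap.id).prod f)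

variable {f : X →ₗ[ℝ] Y} {ε : ℝ≥0}

theorem gluingSeminorm_le (u : X × Y) (z : X) :
    gluingSeminorm f ε u ≤ ‖u.1 + z‖ + ‖u.2 - f z‖ + ε * ‖z‖ := by
  refine (Seminorm.infConvAlong_le u z).trans_eq ?_
  simp [sub_neg_eq_add, NNReal.smul_def]

theorem le_gluingSeminorm {u : X × Y} {c : ℝ} (h : ∀ z, c ≤ ‖u.1 + z‖ + ‖u.2 - f z‖ + ε * ‖z‖) :
    c ≤ gluingSeminorm f ε u :=
  Seminorm.le_infConvAlong fun z => (h z).trans_eq <| by simp [sub_neg_eq_add, NNReal.smul_def]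

theorem gluingSeminorm_neg_apply_le (x : X) : gluingSeminorm f ε (-x, f x) ≤ ε * ‖x‖ :=
  (gluingSeminorm_le _ x).trans_eq (by simp)

theorem gluingSeminorm_inl (hf : ∀ z, ‖z‖ ≤ ‖f z‖ + ε * ‖z‖) (x : X) :
    gluingSeminorm f ε (x, 0) = ‖x‖ :=
  le_antisymm ((gluingSeminorm_le _ 0).trans_eq (by simp)) <| le_gluingSeminorm fun z =>
    calc ‖x‖ ≤ ‖x + z‖ + ‖z‖ := norm_le_add_norm_add x z
      _ ≤ ‖x + z‖ + ‖0 - f z‖ + ε * ‖z‖ := by rw [zero_sub, norm_neg]; linarith [hf z]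

theorem gluingSeminorm_inr (hf : ∀ z, ‖f z‖ ≤ ‖z‖ + ε * ‖z‖) (y : Y) :
    gluingSeminorm f ε (0, y) = ‖y‖ :=
  le_antisymm ((gluingSeminorm_le _ 0).trans_eq (by simp)) <| le_gluingSeminorm fun z =>
    calc ‖y‖ ≤ ‖y - f z‖ + ‖f z‖ := norm_le_norm_sub_add y (f z)
      _ ≤ ‖0 + z‖ + ‖y - f z‖ + ε * ‖z‖ := by rw [zero_add]; linarith [hf z]

theorem min_mul_norm_fst_le_gluingSeminorm (u : X × Y) :
    min (ε : ℝ) 1 * ‖u.1‖ ≤ gluingSeminorm f ε u :=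
  le_gluingSeminorm fun z =>
    calc min (ε : ℝ) 1 * ‖u.1‖ ≤ min (ε : ℝ) 1 * (‖u.1 + z‖ + ‖z‖) := by
          gcongr; exact norm_le_add_norm_add u.1 z
      _ ≤ ‖u.1 + z‖ + ε * ‖z‖ := by
          rw [mul_add]
          gcongr
          · exact mul_le_of_le_one_left (norm_nonneg _) (min_le_right _ _)
          · exact min_le_left _ _
      _ ≤ ‖u.1 + z‖ + ‖u.2 - f z‖ + ε * ‖z‖ := by linarith [norm_nonneg (u.2 - f z)]

end Gluing

theorem gluingSeminorm_eq_zero_iff {X Y : Type*} [NormedAddCommGroup X] [NormedSpace ℝ X]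
    [NormedAddCommGroup Y] [NormedSpace ℝ Y] {f : X →ₗ[ℝ] Y} {ε : ℝ≥0} (hε : 0 < ε)
    (hf : ∀ z, ‖f z‖ ≤ ‖z‖ + ε * ‖z‖) {u : X × Y} :
    gluingSeminorm f ε u = 0 ↔ u = 0 := by
  refine ⟨fun hu => ?_, fun hu => hu ▸ map_zero _⟩
  have hfst : u.1 = 0 := by
    have hmin : (0 : ℝ) < min (ε : ℝ) 1 := lt_min hε one_pos
    have := min_mul_norm_fst_le_gluingSeminorm (f := f) (ε := ε) u
    rw [hu] at this
    exact norm_le_zero_iff.mp (nonpos_of_mul_nonpos_right this hmin)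
  have hsnd : u.2 = 0 := by
    rw [← Prod.mk.eta (p := u), hfst, gluingSeminorm_inr hf] at hu
    exact norm_eq_zero.mp hu
  exact Prod.ext hfst hsnd

theorem exists_norm_on_prod_of_bijective_epsIsometry_general
    {X Y : Type} [NormedAddCommGroup X] [NormedSpace ℝ X]
    [NormedAddCommGroup Y] [NormedSpace ℝ Y]
    (ε : ℝ) (hε : 0 < ε) (f : X →ₗ[ℝ] Y) (hf : IsEpsIsometry ε f) :
    ∃ N : X × Y → ℝ,
      (∀ u : X × Y, N u = 0 ↔ u = 0) ∧
      (∀ (a : ℝ) (u : X × Y), N (a • u) = |a| * N u) ∧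
      (∀ u v : X × Y, N (u + v) ≤ N u + N v) ∧
      (∀ x : X, N (x, 0) = ‖x‖) ∧
      (∀ y : Y, N (0, y) = ‖y‖) ∧
      (∀ x : X, ‖x‖ = 1 → N (-x, f x) ≤ ε) := by
  let ε' : ℝ≥0 := ⟨ε, hε.le⟩
  refine ⟨gluingSeminorm f ε', fun u => gluingSeminorm_eq_zero_iff (ε := ε') hε hf.norm_apply_le,
    fun a u => ?_, map_add_le_add _, gluingSeminorm_inl (hf.norm_le_norm_apply hε.le),
    gluingSeminorm_inr hf.norm_apply_le, fun x hx => ?_⟩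
  · rw [map_smul_eq_mul, Real.norm_eq_abs]
  · exact (gluingSeminorm_neg_apply_le x).trans_eq (by rw [hx, mul_one]; rfl)

/-- If `f : X → Y` is a bijective `ε`-isometry between finite-dimensional real Banach
spaces, there is a norm `N` on `X ⊕ Y` restricting to the given norms on `X` and `Y`
such that `N (-x, f x) ≤ ε` whenever `‖x‖ = 1`. -/
theorem exists_norm_on_prod_of_bijective_epsIsometry
    {X Y : Type} [NormedAddCommGroup X] [NormedSpace ℝ X] [FiniteDimensional ℝ X]
    [NormedAddCommGroup Y] [NormedSpace ℝ Y] [FiniteDimensional ℝ Y]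
    (ε : ℝ) (hε : 0 < ε) (f : X →ₗ[ℝ] Y) (hf : IsEpsIsometry ε f)
    (hbij : Function.Bijective f) :
    ∃ N : X × Y → ℝ,
      (∀ u : X × Y, N u = 0 ↔ u = 0) ∧
      (∀ (a : ℝ) (u : X × Y), N (a • u) = |a| * N u) ∧
      (∀ u v : X × Y, N (u + v) ≤ N u + N v) ∧
      (∀ x : X, N (x, 0) = ‖x‖) ∧
      (∀ y : Y, N (0, y) = ‖y‖) ∧
      (∀ x : X, ‖x‖ = 1 → N (-x, f x) ≤ ε) :=
  exists_norm_on_prod_of_bijective_epsIsometry_general ε hε f hf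
end

section
/- Let E be a Gurariĭ space, let X be a finite-dimensional linear subspace of E, let Y be a finite-dimensional real Banach space, and let f : X → Y be an ε-isometry for some ε > 0. Then for every δ > 0 there exists a δ-isometry g : Y → E such that ‖g ∘ f − id_X‖ < ε (i.e., ‖g(f x) − x‖ < ε · ‖x‖ for all nonzero x ∈ X). -/
/-- A Gurariĭ space: a separable real Banach space `G` such that for all
finite-dimensional Banach spaces `X ⊆ Y`, every `ε > 0` and every linear isometry
`f : X → G`, there is an injective linear operator `g : Y → G` extending `f` with
`‖g‖ ⬝ ‖g⁻¹‖ < 1 + ε` (expressed via constants `M`, `N` bounding `g` above and below). -/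
def IsGurarii (G : Type*) [NormedAddCommGroup G] [NormedSpace ℝ G] : Prop :=
  CompleteSpace G ∧ TopologicalSpace.SeparableSpace G ∧
  ∀ (Y : Type) [NormedAddCommGroup Y] [NormedSpace ℝ Y] [FiniteDimensional ℝ Y]
    (X : Submodule ℝ Y) (ε : ℝ), 0 < ε →
    ∀ f : X →ₗ[ℝ] G, (∀ x : X, ‖f x‖ = ‖x‖) →
      ∃ g : Y →ₗ[ℝ] G, Function.Injective g ∧ (∀ x : X, g x = f x) ∧
        ∃ M N : ℝ, (∀ y : Y, ‖g y‖ ≤ M * ‖y‖) ∧ (∀ y : Y, ‖y‖ ≤ N * ‖g y‖) ∧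
          M * N < 1 + ε

/-!
By compactness of the unit sphere of `X`, `f` is already `(1 + e)`-bi-Lipschitz for some `e < ε`.
Glue `X` and `Y` along `f`: on `X × Y` take the largest norm for which `x ↦ (x, 0)` and
`y ↦ (0, y)` are contractions and `‖(x, 0) - (0, f x)‖ ≤ e‖x‖`; the bi-Lipschitz bounds make both
embeddings isometric. The Gurariĭ property extends the isometry `(x, 0) ↦ x` to a
`(1 + η)`-bi-Lipschitz `G` on the glued space (its constants are close to `1` because `G` preserves
the norm of some nonzero vector), and `g = G ∘ (0, ·)` works, as
`‖g (f x) - x‖ = ‖G ((0, f x) - (x, 0))‖ ≤ (1 + η) e ‖x‖ < ε ‖x‖`.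
-/

section BiLipschitz

variable {X Y : Type*} [NormedAddCommGroup X] [NormedSpace ℝ X]
  [NormedAddCommGroup Y] [NormedSpace ℝ Y]

def IsBiLipschitzWith (K : ℝ) (f : X →ₗ[ℝ] Y) : Prop :=
  ∀ x, ‖f x‖ ≤ K * ‖x‖ ∧ ‖x‖ ≤ K * ‖f x‖

variable {K : ℝ} {f : X →ₗ[ℝ] Y}

lemma isBiLipschitzWith_of_sphere (h : ∀ x : X, ‖x‖ = 1 → ‖f x‖ ≤ K ∧ 1 ≤ K * ‖f x‖) :
    IsBiLipschitzWith K f := by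
  intro x
  rcases eq_or_ne x 0 with rfl | hx
  · simp
  have hx' : 0 < ‖x‖ := norm_pos_iff.2 hx
  obtain ⟨h₁, h₂⟩ := h (‖x‖⁻¹ • x) (norm_smul_inv_norm hx)
  rw [map_smul, norm_smul, norm_inv, norm_norm, ← div_eq_inv_mul] at h₁ h₂
  rw [div_le_iff₀ hx'] at h₁
  rw [mul_div_assoc', le_div_iff₀ hx', one_mul] at h₂
  exact ⟨h₁, h₂⟩

lemma isBiLipschitzWith_of_bounds {M N δ : ℝ} (hM : ∀ x, ‖f x‖ ≤ M * ‖x‖)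
    (hN : ∀ x, ‖x‖ ≤ N * ‖f x‖) (hMN : M * N < 1 + δ) {x₀ : X} (hx₀ : x₀ ≠ 0)
    (hfx₀ : ‖f x₀‖ = ‖x₀‖) : IsBiLipschitzWith (1 + δ) f := by
  have hx₀' : 0 < ‖x₀‖ := norm_pos_iff.2 hx₀
  have hM₁ : 1 ≤ M := le_of_mul_le_mul_right (by simpa [hfx₀] using hM x₀) hx₀'
  have hN₁ : 1 ≤ N := le_of_mul_le_mul_right (by simpa [hfx₀] using hN x₀) hx₀'
  have hM' : M ≤ 1 + δ := by nlinarith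
  have hN' : N ≤ 1 + δ := by nlinarith
  exact fun x => ⟨(hM x).trans (by gcongr), (hN x).trans (by gcongr)⟩

lemma IsBiLipschitzWith.isEpsIsometry {δ : ℝ} (hf : IsBiLipschitzWith K f) (hK : K < 1 + δ) :
    IsEpsIsometry δ f := by
  intro x hx
  obtain ⟨h₁, h₂⟩ := hf x
  simp only [hx, mul_one] at h₁ h₂
  have hfx : 0 < ‖f x‖ := (norm_nonneg _).lt_of_ne' fun h => by simp [h] at h₂; linarith
  refine ⟨(inv_lt_iff_one_lt_mul₀' (by linarith)).2 ?_, h₁.trans_lt hK⟩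
  exact h₂.trans_lt (mul_lt_mul_of_pos_right hK hfx)

lemma IsBiLipschitzWith.comp {Z : Type*} [NormedAddCommGroup Z] [NormedSpace ℝ Z]
    {g : Y →ₗ[ℝ] Z} (hg : IsBiLipschitzWith K g) {j : X →ₗ[ℝ] Y} (hj : ∀ x, ‖j x‖ = ‖x‖) :
    IsBiLipschitzWith K (g ∘ₗ j) :=
  fun x => by simpa only [LinearMap.comp_apply, hj] using hg (j x)

lemma IsEpsIsometry.exists_isBiLipschitzWith [FiniteDimensional ℝ X] {ε : ℝ}
    (hf : IsEpsIsometry ε f) (hε : 0 < ε) : ∃ e, 0 < e ∧ e < ε ∧ IsBiLipschitzWith (1 + e) f := by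
  have hfx : ∀ x : X, ‖x‖ = 1 → 0 < ‖f x‖ := fun x hx => (hf x hx).1.trans' (by positivity)
  let φ : X → ℝ := fun x => max ‖f x‖ ‖f x‖⁻¹
  have hφ : ∀ x : X, ‖x‖ = 1 → φ x < 1 + ε := fun x hx =>
    max_lt (hf x hx).2 (inv_lt_of_inv_lt₀ (by positivity) (hf x hx).1)
  obtain ⟨c, hcε, hc⟩ : ∃ c < 1 + ε, ∀ x ∈ Metric.sphere (0 : X) 1, φ x ≤ c := by
    rcases (Metric.sphere (0 : X) 1).eq_empty_or_nonempty with h | h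
    · exact ⟨1, by linarith, by simp [h]⟩
    have hφc : ContinuousOn φ (Metric.sphere 0 1) :=
      ContinuousOn.sup f.continuous_of_finiteDimensional.norm.continuousOn
        (f.continuous_of_finiteDimensional.norm.continuousOn.inv₀ fun x hx =>
          (hfx x (by simpa using hx)).ne')
    obtain ⟨x₁, hx₁, hmax⟩ := (isCompact_sphere 0 1).exists_isMaxOn h hφc
    exact ⟨φ x₁, hφ _ (by simpa using hx₁), hmax⟩
  refine ⟨max (c - 1) (ε / 2), lt_max_of_lt_right (half_pos hε),
    max_lt (by linarith) (by linarith), isBiLipschitzWith_of_sphere fun x hx => ?_⟩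
  have hφx : φ x ≤ 1 + max (c - 1) (ε / 2) := (hc x (by simpa using hx)).trans (by
    linarith [le_max_left (c - 1) (ε / 2)])
  exact ⟨(le_max_left _ _).trans hφx,
    (inv_le_iff_one_le_mul₀ (hfx x hx)).1 ((le_max_right _ _).trans hφx)⟩

end BiLipschitz

section Glue

variable {X Y : Type*} [NormedAddCommGroup X] [NormedSpace ℝ X]
  [NormedAddCommGroup Y] [NormedSpace ℝ Y]

noncomputable def glueNorm (f : X →L[ℝ] Y) (e : ℝ) (p : X × Y) : ℝ :=
  ⨅ u : X, ‖p.1 - u‖ + ‖p.2 + f u‖ + e * ‖u‖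

variable {f : X →L[ℝ] Y} {e : ℝ}

lemma glueNorm_le (he : 0 ≤ e) (p : X × Y) (u : X) :
    glueNorm f e p ≤ ‖p.1 - u‖ + ‖p.2 + f u‖ + e * ‖u‖ :=
  ciInf_le ⟨0, by rintro _ ⟨v, rfl⟩; positivity⟩ u

lemma glueNorm_nonneg (he : 0 ≤ e) (p : X × Y) : 0 ≤ glueNorm f e p :=
  le_ciInf fun _ => by positivity

lemma glueNorm_zero (he : 0 ≤ e) : glueNorm f e (0 : X × Y) = 0 :=
  le_antisymm (by simpa using glueNorm_le (f := f) he 0 0) (glueNorm_nonneg he 0)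

lemma glueNorm_add_le (he : 0 ≤ e) (p q : X × Y) :
    glueNorm f e (p + q) ≤ glueNorm f e p + glueNorm f e q := by
  refine le_ciInf_add_ciInf fun u v => (glueNorm_le he _ (u + v)).trans ?_
  have h₁ : ‖(p + q).1 - (u + v)‖ ≤ ‖p.1 - u‖ + ‖q.1 - v‖ := by
    simpa [add_sub_add_comm] using norm_add_le (p.1 - u) (q.1 - v)
  have h₂ : ‖(p + q).2 + f (u + v)‖ ≤ ‖p.2 + f u‖ + ‖q.2 + f v‖ := by
    simpa [add_add_add_comm] using norm_add_le (p.2 + f u) (q.2 + f v)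
  have h₃ : e * ‖u + v‖ ≤ e * ‖u‖ + e * ‖v‖ := by
    rw [← mul_add]; exact mul_le_mul_of_nonneg_left (norm_add_le u v) he
  linarith

lemma glueNorm_smul_le (he : 0 ≤ e) (c : ℝ) (p : X × Y) :
    glueNorm f e (c • p) ≤ |c| * glueNorm f e p := by
  have h : glueNorm f e (c • p) ≤ ⨅ u : X, |c| * (‖p.1 - u‖ + ‖p.2 + f u‖ + e * ‖u‖) := by
    refine le_ciInf fun u => (glueNorm_le he _ (c • u)).trans_eq ?_
    simp only [Prod.smul_fst, Prod.smul_snd, map_smul, ← smul_sub, ← smul_add, norm_smul,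
      Real.norm_eq_abs]
    ring
  rwa [← Real.mul_iInf_of_nonneg (abs_nonneg c)] at h

lemma glueNorm_neg (he : 0 ≤ e) (p : X × Y) : glueNorm f e (-p) = glueNorm f e p := by
  have key : ∀ q : X × Y, glueNorm f e (-q) ≤ glueNorm f e q := fun q => by
    simpa using glueNorm_smul_le he (-1) q
  exact le_antisymm (key p) (by simpa using key (-p))

lemma mul_norm_add_norm_le_glueNorm (he : 0 ≤ e) (p : X × Y) :
    e * (‖p.1‖ + ‖p.2‖) ≤ (1 + e + ‖f‖) * glueNorm f e p := by
  rw [glueNorm, Real.mul_iInf_of_nonneg (by positivity)]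
  refine le_ciInf fun u => ?_
  have h₁ : ‖p.1‖ ≤ ‖p.1 - u‖ + ‖u‖ := norm_le_norm_sub_add p.1 u
  have h₂ : ‖p.2‖ ≤ ‖p.2 + f u‖ + ‖f‖ * ‖u‖ :=
    (norm_le_add_norm_add p.2 (f u)).trans (by gcongr; exact f.le_opNorm u)
  nlinarith [mul_le_mul_of_nonneg_left h₁ he, mul_le_mul_of_nonneg_left h₂ he,
    mul_nonneg (mul_nonneg he he) (norm_nonneg u), mul_nonneg he (norm_nonneg u),
    mul_nonneg (norm_nonneg f) (norm_nonneg (p.1 - u)),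
    mul_nonneg (norm_nonneg f) (norm_nonneg (p.2 + f u)), norm_nonneg (p.1 - u),
    norm_nonneg (p.2 + f u)]

def Glue (_f : X →L[ℝ] Y) (_e : ℝ) : Type _ := X × Y

namespace Glue

instance : AddCommGroup (Glue f e) := inferInstanceAs (AddCommGroup (X × Y))

instance : Module ℝ (Glue f e) := inferInstanceAs (Module ℝ (X × Y))

variable [he : Fact (0 < e)]

noncomputable instance : NormedAddCommGroup (Glue f e) :=
  AddGroupNorm.toNormedAddCommGroup
    { toFun := glueNorm f e
      map_zero' := glueNorm_zero he.out.le
      add_le' := glueNorm_add_le he.out.le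
      neg' := glueNorm_neg he.out.le
      eq_zero_of_map_eq_zero' := fun p hp => by
        have h := mul_norm_add_norm_le_glueNorm (f := f) he.out.le p
        rw [show glueNorm f e p = 0 from hp, mul_zero] at h
        have h₀ : ‖p.1‖ + ‖p.2‖ ≤ 0 := nonpos_of_mul_nonpos_right h he.out
        exact Prod.ext (norm_le_zero_iff.1 (by linarith [norm_nonneg p.2]))
          (norm_le_zero_iff.1 (by linarith [norm_nonneg p.1])) }

noncomputable instance : NormedSpace ℝ (Glue f e) :=
  ⟨fun c p => glueNorm_smul_le he.out.le c p⟩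

instance [FiniteDimensional ℝ X] [FiniteDimensional ℝ Y] : FiniteDimensional ℝ (Glue f e) :=
  inferInstanceAs (FiniteDimensional ℝ (X × Y))

variable (f e)

def inl : X →ₗ[ℝ] Glue f e := LinearMap.inl ℝ X Y

def inr : Y →ₗ[ℝ] Glue f e := LinearMap.inr ℝ X Y

variable {f e}

lemma norm_inl (hf : ∀ u, ‖u‖ ≤ (1 + e) * ‖f u‖) (x : X) : ‖inl f e x‖ = ‖x‖ := by
  change glueNorm f e (x, 0) = ‖x‖
  refine le_antisymm (by simpa using glueNorm_le (f := f) he.out.le (x, 0) 0) ?_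
  refine le_ciInf fun u => ?_
  have h : ‖u‖ ≤ ‖f u‖ + e * ‖u‖ := by
    rcases le_total ‖u‖ ‖f u‖ with h | h
    · nlinarith [he.out, norm_nonneg u]
    · nlinarith [hf u, mul_le_mul_of_nonneg_left h he.out.le]
  have h' := norm_le_norm_sub_add x u
  simp only [zero_add]
  linarith

lemma norm_inr (hf : ∀ u, ‖f u‖ ≤ (1 + e) * ‖u‖) (y : Y) : ‖inr f e y‖ = ‖y‖ := by
  change glueNorm f e (0, y) = ‖y‖
  refine le_antisymm (by simpa using glueNorm_le (f := f) he.out.le (0, y) 0) ?_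
  refine le_ciInf fun u => ?_
  have h := norm_le_add_norm_add y (f u)
  have h' := hf u
  simp only [zero_sub, norm_neg]
  linarith

lemma norm_inr_sub_inl_le (x : X) : ‖inr f e (f x) - inl f e x‖ ≤ e * ‖x‖ := by
  have h : inr f e (f x) - inl f e x = ((-x, f x) : X × Y) :=
    Prod.ext (zero_sub x) (sub_zero (f x))
  rw [h]
  exact (glueNorm_le he.out.le (-x, f x) (-x)).trans_eq (by simp)

end Glue

end Glue

namespace IsGurarii

variable {E : Type*} [NormedAddCommGroup E] [NormedSpace ℝ E]

theorem exists_isBiLipschitzWith_extension (hE : IsGurarii E) {X Z : Type}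
    [NormedAddCommGroup X] [NormedSpace ℝ X] [Nontrivial X]
    [NormedAddCommGroup Z] [NormedSpace ℝ Z] [FiniteDimensional ℝ Z]
    (j : X →ₗ[ℝ] Z) (hj : ∀ x, ‖j x‖ = ‖x‖) (φ : X →ₗ[ℝ] E) (hφ : ∀ x, ‖φ x‖ = ‖x‖)
    {δ : ℝ} (hδ : 0 < δ) :
    ∃ G : Z →ₗ[ℝ] E, (∀ x, G (j x) = φ x) ∧ IsBiLipschitzWith (1 + δ) G := by
  have hj_inj : Function.Injective j := fun a b hab => by
    rw [← sub_eq_zero, ← norm_eq_zero, ← hj, map_sub, hab, sub_self, norm_zero]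
  let ι := LinearEquiv.ofInjective j hj_inj
  obtain ⟨G, -, hGι, M, N, hM, hN, hMN⟩ :=
    hE.2.2 Z (LinearMap.range j) δ hδ (φ ∘ₗ ι.symm.toLinearMap) fun w => by
      obtain ⟨x, rfl⟩ := ι.surjective w
      simp [ι, hφ, hj, Submodule.coe_norm]
  have hGj : ∀ x, G (j x) = φ x := fun x => by simpa [ι] using hGι (ι x)
  obtain ⟨x₀, hx₀⟩ := exists_ne (0 : X)
  refine ⟨G, hGj, isBiLipschitzWith_of_bounds hM hN hMN (x₀ := j x₀) ?_ (by rw [hGj, hφ, hj])⟩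
  rwa [← norm_ne_zero_iff, hj, norm_ne_zero_iff]

theorem exists_isBiLipschitzWith (hE : IsGurarii E) (Z : Type) [NormedAddCommGroup Z]
    [NormedSpace ℝ Z] [FiniteDimensional ℝ Z] {δ : ℝ} (hδ : 0 < δ) :
    ∃ G : Z →ₗ[ℝ] E, IsBiLipschitzWith (1 + δ) G := by
  rcases subsingleton_or_nontrivial Z with hZ | hZ
  · exact ⟨0, fun z => by simp [Subsingleton.elim z 0]⟩
  obtain ⟨G, -, -, M, N, hM, hN, hMN⟩ := hE.2.2 Z ⊥ δ hδ 0 fun x => by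
    simp [Submodule.coe_norm, (Submodule.mem_bot ℝ).1 x.2]
  obtain ⟨z₀, hz₀⟩ := exists_ne (0 : Z)
  have hz₀' : 0 < ‖z₀‖ := norm_pos_iff.2 hz₀
  set c := ‖G z₀‖ / ‖z₀‖
  have hc : 0 < c := div_pos ((norm_nonneg _).lt_of_ne' fun h => by
    have := hN z₀; rw [h, mul_zero] at this; linarith) hz₀'
  refine ⟨c⁻¹ • G, isBiLipschitzWith_of_bounds (M := c⁻¹ * M) (N := c * N) (fun z => ?_)
    (fun z => ?_) ?_ hz₀ ?_⟩
  · rw [LinearMap.smul_apply, norm_smul, norm_inv, Real.norm_of_nonneg hc.le, mul_assoc]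
    exact mul_le_mul_of_nonneg_left (hM z) (inv_nonneg.2 hc.le)
  · rw [LinearMap.smul_apply, norm_smul, norm_inv, Real.norm_of_nonneg hc.le]
    convert hN z using 1
    field_simp
  · convert hMN using 1
    field_simp
  · rw [LinearMap.smul_apply, norm_smul, norm_inv, Real.norm_of_nonneg hc.le]
    field_simp
    exact (div_mul_cancel₀ _ hz₀'.ne').symm

end IsGurarii

/-- If `E` is a Gurariĭ space, `X ⊆ E` a finite-dimensional subspace, `Y` a
finite-dimensional real Banach space and `f : X → Y` an `ε`-isometry, then for each
`δ > 0` there is a `δ`-isometry `g : Y → E` with `‖g ∘ f - id_X‖ < ε`. -/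
theorem exists_epsIsometry_almost_inverse
    {E : Type} [NormedAddCommGroup E] [NormedSpace ℝ E] (hE : IsGurarii E)
    {Y : Type} [NormedAddCommGroup Y] [NormedSpace ℝ Y] [FiniteDimensional ℝ Y]
    (X : Submodule ℝ E) (hX : FiniteDimensional ℝ X)
    (ε : ℝ) (hε : 0 < ε) (f : X →ₗ[ℝ] Y) (hf : IsEpsIsometry ε f) :
    ∀ δ : ℝ, 0 < δ →
      ∃ g : Y →ₗ[ℝ] E, IsEpsIsometry δ g ∧
        ∀ x : X, x ≠ 0 → ‖g (f x) - (x : E)‖ < ε * ‖x‖ := by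
  intro δ hδ
  rcases subsingleton_or_nontrivial X with hX₀ | hX₀
  · obtain ⟨g, hg⟩ := hE.exists_isBiLipschitzWith Y (half_pos hδ)
    exact ⟨g, hg.isEpsIsometry (by linarith), fun x hx => (hx (Subsingleton.elim x 0)).elim⟩
  obtain ⟨e, he, heε, hfe⟩ := hf.exists_isBiLipschitzWith hε
  have : Fact (0 < e) := ⟨he⟩
  obtain ⟨η, hη, hηδ, hηe⟩ : ∃ η, 0 < η ∧ η < δ ∧ (1 + η) * e < ε := by
    set η := min (δ / 2) ((ε - e) / (2 * e))
    have hηe : η * (2 * e) ≤ ε - e := (le_div_iff₀ (by positivity)).1 (min_le_right _ _)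
    exact ⟨η, lt_min (half_pos hδ) (div_pos (sub_pos.2 heε) (by positivity)),
      (min_le_left _ _).trans_lt (half_lt_self hδ), by linarith⟩
  let f' := LinearMap.toContinuousLinearMap f
  obtain ⟨G, hGext, hG⟩ := hE.exists_isBiLipschitzWith_extension (Glue.inl f' e)
    (Glue.norm_inl fun u => (hfe u).2) X.subtype (fun x => rfl) hη
  refine ⟨G ∘ₗ Glue.inr f' e, (hG.comp (Glue.norm_inr fun u => (hfe u).1)).isEpsIsometry
    (by linarith), fun x hx => ?_⟩
  calc ‖G (Glue.inr f' e (f x)) - x‖ = ‖G (Glue.inr f' e (f' x) - Glue.inl f' e x)‖ := by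
        rw [map_sub, hGext]; rfl
    _ ≤ (1 + η) * ‖Glue.inr f' e (f' x) - Glue.inl f' e x‖ := (hG _).1
    _ ≤ (1 + η) * (e * ‖x‖) := by gcongr; exact Glue.norm_inr_sub_inl_le x
    _ < ε * ‖x‖ := by
        rw [← mul_assoc]; exact mul_lt_mul_of_pos_right hηe (norm_pos_iff.2 hx)
end

section
/- Let X₀ ⊆ X₁ and Y₀ be finite-dimensional real Banach spaces and let f : X₀ → Y₀ be an ε-isometry for some ε > 0. Then there exist a finite-dimensional real Banach space Y₁ containing Y₀ as a subspace and a linear isometry g : X₁ → Y₁ such that ‖g|_{X₀} − f‖ < ε (i.e., ‖g x − f x‖ < ε · ‖x‖ for all nonzero x ∈ X₀, where f is viewed as taking values in Y₁). -/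
open WithLp Metric

section Distortion

variable {X Y : Type*} [NormedAddCommGroup X] [NormedSpace ℝ X]
  [NormedAddCommGroup Y] [NormedSpace ℝ Y]

theorem IsEpsIsometry.abs_norm_sub_one_lt {ε : ℝ} {f : X →ₗ[ℝ] Y} (hf : IsEpsIsometry ε f)
    {x : X} (hx : ‖x‖ = 1) : |‖f x‖ - 1| < ε := by
  obtain ⟨hlow, hup⟩ := hf x hx
  have hpos : 0 < 1 + ε := (norm_nonneg _).trans_lt hup
  have hinv : 1 - ε ≤ (1 + ε)⁻¹ := by
    rw [← one_div, le_div_iff₀ hpos]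
    nlinarith [sq_nonneg ε]
  exact abs_sub_lt_iff.2 ⟨by linarith, by linarith⟩

theorem LinearMap.abs_norm_apply_sub_norm_le_of_norm_eq_one (f : X →ₗ[ℝ] Y) {δ : ℝ}
    (h : ∀ x : X, ‖x‖ = 1 → |‖f x‖ - 1| ≤ δ) (x : X) : |‖f x‖ - ‖x‖| ≤ δ * ‖x‖ := by
  rcases eq_or_ne x 0 with rfl | hx
  · simp
  have hunit : ‖‖x‖⁻¹ • x‖ = 1 := norm_smul_inv_norm hx
  have hfx : ‖f x‖ = ‖x‖ * ‖f (‖x‖⁻¹ • x)‖ := by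
    rw [map_smul, norm_smul, norm_inv, norm_norm, mul_inv_cancel_left₀ (norm_ne_zero_iff.2 hx)]
  rw [hfx, ← mul_sub_one, abs_mul, abs_norm, mul_comm δ]
  gcongr
  exact h _ hunit

theorem IsEpsIsometry.exists_abs_norm_sub_norm_le [FiniteDimensional ℝ X] {ε : ℝ} (hε : 0 < ε)
    {f : X →ₗ[ℝ] Y} (hf : IsEpsIsometry ε f) :
    ∃ δ, 0 ≤ δ ∧ δ < ε ∧ ∀ x : X, |‖f x‖ - ‖x‖| ≤ δ * ‖x‖ := by
  rcases (sphere (0 : X) 1).eq_empty_or_nonempty with hS | hS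
  · refine ⟨0, le_rfl, hε, f.abs_norm_apply_sub_norm_le_of_norm_eq_one fun x hx => ?_⟩
    exact absurd (mem_sphere_zero_iff_norm.2 hx) (hS ▸ Set.notMem_empty x)
  have hcont : Continuous fun x : X => |‖f x‖ - 1| := by
    have := f.continuous_of_finiteDimensional
    fun_prop
  obtain ⟨x₀, hx₀, hmax⟩ := (isCompact_sphere (0 : X) 1).exists_isMaxOn hS hcont.continuousOn
  exact ⟨_, abs_nonneg _, hf.abs_norm_sub_one_lt (mem_sphere_zero_iff_norm.1 hx₀),
    f.abs_norm_apply_sub_norm_le_of_norm_eq_one fun x hx => hmax (mem_sphere_zero_iff_norm.2 hx)⟩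

end Distortion

section Amalgamation

variable {X₁ Y₀ : Type*} [NormedAddCommGroup X₁] [NormedSpace ℝ X₁]
  [NormedAddCommGroup Y₀] [NormedSpace ℝ Y₀] {X₀ : Submodule ℝ X₁}

namespace Amalgamation

abbrev L1Sum (Y₀ : Type*) (X₀ : Submodule ℝ X₁) : Type _ := WithLp 1 (Y₀ × WithLp 1 (X₁ × X₀))

variable (f : X₀ →ₗ[ℝ] Y₀) (δ : ℝ)

def graph : X₀ →ₗ[ℝ] L1Sum Y₀ X₀ where
  toFun a := toLp 1 (f a, toLp 1 (-(a : X₁), δ • a))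
  map_add' a b := by
    simp only [map_add, Submodule.coe_add, neg_add, smul_add, ← toLp_add, Prod.mk_add_mk]
  map_smul' c a := by
    simp only [map_smul, Submodule.coe_smul, smul_neg, smul_comm δ c, RingHom.id_apply,
      ← toLp_smul, Prod.smul_mk]

def embed : Y₀ × X₁ →ₗ[ℝ] L1Sum Y₀ X₀ where
  toFun p := toLp 1 (p.1, toLp 1 (p.2, 0))
  map_add' p q := by
    simp only [Prod.fst_add, Prod.snd_add, ← toLp_add, Prod.mk_add_mk, add_zero]
  map_smul' c p := by
    simp only [Prod.smul_fst, Prod.smul_snd, RingHom.id_apply, ← toLp_smul, Prod.smul_mk,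
      smul_zero]

theorem norm_embed_add_graph (y : Y₀) (x : X₁) (a : X₀) :
    ‖embed (y, x) + graph f δ a‖ = ‖y + f a‖ + ‖x - a‖ + |δ| * ‖a‖ := by
  have : embed (y, x) + graph f δ a = toLp 1 (y + f a, toLp 1 (x - a, δ • a)) := by
    change toLp 1 (y, toLp 1 (x, (0 : X₀))) + toLp 1 (f a, toLp 1 (-(a : X₁), δ • a)) = _
    rw [← toLp_add, Prod.mk_add_mk, ← toLp_add, Prod.mk_add_mk, zero_add, ← sub_eq_add_neg]
  rw [this, prod_norm_eq_of_L1, prod_norm_eq_of_L1, toLp_fst, toLp_snd, toLp_fst, toLp_snd,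
    norm_smul, Real.norm_eq_abs, add_assoc]

instance [FiniteDimensional ℝ X₁] : IsClosed (LinearMap.range (graph f δ) : Set (L1Sum Y₀ X₀)) :=
  Submodule.closed_of_finiteDimensional _

end Amalgamation

abbrev Amalgamation (f : X₀ →ₗ[ℝ] Y₀) (δ : ℝ) : Type _ :=
  Amalgamation.L1Sum Y₀ X₀ ⧸ LinearMap.range (Amalgamation.graph f δ)

namespace Amalgamation

variable (f : X₀ →ₗ[ℝ] Y₀) (δ : ℝ)

def mk : Y₀ × X₁ →ₗ[ℝ] Amalgamation f δ := (LinearMap.range (graph f δ)).mkQ ∘ₗ embed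

theorem mk_eq_mk_embed_add_graph (p : Y₀ × X₁) (a : X₀) :
    mk f δ p = Submodule.Quotient.mk (embed p + graph f δ a) := by
  rw [Submodule.Quotient.mk_add,
    (Submodule.Quotient.mk_eq_zero _).2 (LinearMap.mem_range_self _ a), add_zero]
  rfl

theorem norm_mk_le (y : Y₀) (x : X₁) (a : X₀) :
    ‖mk f δ (y, x)‖ ≤ ‖y + f a‖ + ‖x - a‖ + |δ| * ‖a‖ := by
  rw [← norm_embed_add_graph, mk_eq_mk_embed_add_graph f δ _ a]
  exact QuotientAddGroup.norm_mk_le_norm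

theorem le_norm_mk (y : Y₀) (x : X₁) {r : ℝ}
    (h : ∀ a : X₀, r ≤ ‖y + f a‖ + ‖x - a‖ + |δ| * ‖a‖) : r ≤ ‖mk f δ (y, x)‖ := by
  refine QuotientAddGroup.le_norm_iff.2 fun w hw => ?_
  obtain ⟨a, ha⟩ : w - embed (y, x) ∈ LinearMap.range (graph f δ) :=
    (Submodule.Quotient.eq _).1 hw
  rw [← sub_add_cancel w (embed (y, x)), add_comm, ← ha, norm_embed_add_graph]
  exact h a

theorem norm_mk_neg_apply_le (a : X₀) : ‖mk f δ (-f a, a)‖ ≤ |δ| * ‖a‖ := by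
  simpa using norm_mk_le f δ (-f a) a a

variable {f δ} (h : ∀ a : X₀, |‖f a‖ - ‖a‖| ≤ δ * ‖a‖)
include h

theorem norm_mk_inl (y : Y₀) : ‖mk f δ (y, 0)‖ = ‖y‖ := by
  refine le_antisymm (by simpa using norm_mk_le f δ y 0 0) (le_norm_mk f δ _ _ fun a => ?_)
  have hy : ‖y‖ ≤ ‖y + f a‖ + ‖f a‖ := norm_le_add_norm_add y (f a)
  have hfa : ‖f a‖ - ‖a‖ ≤ δ * ‖a‖ := (abs_le.1 (h a)).2
  have hδ : δ * ‖a‖ ≤ |δ| * ‖a‖ := by gcongr; exact le_abs_self δ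
  simp only [zero_sub, norm_neg, Submodule.coe_norm] at *
  linarith

theorem norm_mk_inr (x : X₁) : ‖mk f δ (0, x)‖ = ‖x‖ := by
  refine le_antisymm (by simpa using norm_mk_le f δ 0 x 0) (le_norm_mk f δ _ _ fun a => ?_)
  have hx : ‖x‖ ≤ ‖x - a‖ + ‖a‖ := norm_le_norm_sub_add x a
  have hfa : -(δ * ‖a‖) ≤ ‖f a‖ - ‖a‖ := (abs_le.1 (h a)).1
  have hδ : δ * ‖a‖ ≤ |δ| * ‖a‖ := by gcongr; exact le_abs_self δ
  simp only [zero_add, Submodule.coe_norm] at *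
  linarith

end Amalgamation

end Amalgamation

/-- If `X₀ ⊆ X₁` and `Y₀` are finite-dimensional real Banach spaces and `f : X₀ → Y₀`
is an `ε`-isometry, then there are a finite-dimensional real Banach space `Y₁`
containing `Y₀` (via a linear isometry `ι : Y₀ → Y₁`) and a linear isometry
`g : X₁ → Y₁` such that `‖g ∣ X₀ - f‖ < ε`. -/
theorem exists_isometry_approximating_epsIsometry
    {X₁ Y₀ : Type} [NormedAddCommGroup X₁] [NormedSpace ℝ X₁] [FiniteDimensional ℝ X₁]
    [NormedAddCommGroup Y₀] [NormedSpace ℝ Y₀] [FiniteDimensional ℝ Y₀]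
    (X₀ : Submodule ℝ X₁)
    (ε : ℝ) (hε : 0 < ε) (f : X₀ →ₗ[ℝ] Y₀) (hf : IsEpsIsometry ε f) :
    ∃ (Y₁ : Type) (_ : NormedAddCommGroup Y₁) (_ : NormedSpace ℝ Y₁),
      FiniteDimensional ℝ Y₁ ∧
      ∃ (ι : Y₀ →ₗ[ℝ] Y₁) (g : X₁ →ₗ[ℝ] Y₁),
        (∀ y : Y₀, ‖ι y‖ = ‖y‖) ∧
        (∀ x : X₁, ‖g x‖ = ‖x‖) ∧
        ∀ x : X₀, x ≠ 0 → ‖g (x : X₁) - ι (f x)‖ < ε * ‖x‖ := by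
  obtain ⟨δ, hδ0, hδε, hδ⟩ := hf.exists_abs_norm_sub_norm_le hε
  refine ⟨Amalgamation f δ, inferInstance, inferInstance, inferInstance,
    Amalgamation.mk f δ ∘ₗ LinearMap.inl ℝ Y₀ X₁, Amalgamation.mk f δ ∘ₗ LinearMap.inr ℝ Y₀ X₁,
    Amalgamation.norm_mk_inl hδ, Amalgamation.norm_mk_inr hδ, fun x hx => ?_⟩
  calc ‖Amalgamation.mk f δ (0, x) - Amalgamation.mk f δ (f x, 0)‖
      = ‖Amalgamation.mk f δ (-f x, x)‖ := by rw [← map_sub, Prod.mk_sub_mk, zero_sub, sub_zero]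
    _ ≤ |δ| * ‖x‖ := Amalgamation.norm_mk_neg_apply_le f δ x
    _ < ε * ‖x‖ := by
      rw [abs_of_nonneg hδ0]
      exact mul_lt_mul_of_pos_right hδε (norm_pos_iff.2 hx)
end
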